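/- arXiv:2308.04575 — 9 statements merged into one kernel-verified Lean document; each statement's English description precedes it below -/
import Mathlib

section
/- Let G be a graph with no safe edges (all edges unsafe). Then G contains a Hamiltonian cycle if and only if G has an unsafe spanning connected subgraph T with at most n edges, where n is the number of vertices of G. -/
open SimpleGraph

/-- `T` is an unsafe spanning connected subgraph of `G` with unsafe edge set `Unsafe`:
`T` consists of edges of `G`, the graph `(V, T)` is spanning and connected, and it
remains connected after removal of any single unsafe edge of `T`. -/
def IsUSCS {V : Type*} (G : SimpleGraph V) (Unsafe : Set (Sym2 V)) (T : Set (Sym2 V)) : Prop :=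
  T ⊆ G.edgeSet ∧ (SimpleGraph.fromEdgeSet T).Connected ∧
    ∀ e ∈ T, e ∈ Unsafe → (SimpleGraph.fromEdgeSet (T \ {e})).Connected

/-!
When every edge is unsafe, an unsafe spanning connected subgraph is exactly a spanning
2-edge-connected subgraph. The edges of a Hamiltonian cycle form one with `n` edges. Conversely,
2-edge-connectivity forces every degree to be at least 2, so a subgraph with at most `n` edges
has degree sum at most `2n` and is 2-regular; being connected, it is a single cycle through all
vertices.
-/

open Finset

namespace SimpleGraph

variable {V : Type*} {G : SimpleGraph V}

lemma isUSCS_edgeSet_iff {T : Set (Sym2 V)} :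
    IsUSCS G G.edgeSet T ↔
      T ⊆ G.edgeSet ∧ Nonempty V ∧ (fromEdgeSet T).IsEdgeConnected 2 := by
  simp only [IsUSCS, isEdgeConnected_two, ← deleteEdges_fromEdgeSet]
  constructor
  · rintro ⟨hTG, hT, hdel⟩
    refine ⟨hTG, hT.nonempty, fun e => ?_⟩
    by_cases he : e ∈ T
    · exact (hdel e he (hTG he)).preconnected
    · rw [deleteEdges_fromEdgeSet, Set.sdiff_singleton_eq_self he]
      exact hT.preconnected
  · rintro ⟨hTG, hne, hdel⟩
    exact ⟨hTG, (isEdgeConnected_two.mpr hdel).connected two_ne_zero, fun e _ _ => ⟨hdel e⟩⟩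

lemma Walk.IsCycle.isHamiltonianCycle_of_forall_mem_support [DecidableEq V] {a : V}
    {p : G.Walk a a} (hp : p.IsCycle) (hmem : ∀ v, v ∈ p.support) : p.IsHamiltonianCycle := by
  rw [Walk.isHamiltonianCycle_iff_isCycle_and_support_count_tail_eq_one]
  refine ⟨hp, fun v => List.count_eq_one_of_mem hp.support_nodup ?_⟩
  obtain rfl | hva := eq_or_ne v a
  · exact Walk.end_mem_tail_support hp.not_nil
  · exact List.mem_of_ne_of_mem hva (p.cons_tail_support.symm ▸ hmem v)

lemma Walk.IsTrail.ncard_edgeSet {u v : V} {p : G.Walk u v} (hp : p.IsTrail) :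
    p.edgeSet.ncard = p.length := by
  classical
  rw [← p.coe_edges_toFinset, Set.ncard_coe_finset, List.toFinset_card_of_nodup hp.edges_nodup,
    p.length_edges]

lemma Walk.IsHamiltonianCycle.isEdgeConnected_two_fromEdgeSet [DecidableEq V] {a : V}
    {p : G.Walk a a} (hp : p.IsHamiltonianCycle) : (fromEdgeSet p.edgeSet).IsEdgeConnected 2 := by
  have hedges : ∀ e ∈ p.edges, e ∈ (fromEdgeSet p.edgeSet).edgeSet := fun e he => by
    rw [edgeSet_fromEdgeSet]
    exact ⟨he, G.not_isDiag_of_mem_edgeSet (p.edges_subset_edgeSet he)⟩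
  intro u v
  exact (hp.isCycle.transfer hedges).isTrail.isEdgeReachable_two
    (by simpa using hp.mem_support u) (by simpa using hp.mem_support v)

lemma isRegularOfDegree_of_le_degree [Fintype V] [DecidableRel G.Adj] {k : ℕ}
    (hdeg : ∀ v, k ≤ G.degree v) (hcard : 2 * #G.edgeFinset ≤ k * Fintype.card V) :
    G.IsRegularOfDegree k := by
  have hsum : ∑ v, G.degree v ≤ ∑ _v : V, k := by
    rw [sum_degrees_eq_twice_card_edges, sum_const, card_univ, smul_eq_mul]
    lia
  exact fun v => ((sum_eq_sum_iff_of_le fun v _ => hdeg v).mp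
    (le_antisymm (sum_le_sum fun v _ => hdeg v) hsum) v (mem_univ v)).symm

lemma IsRegularOfDegree.isCycles [Fintype V] [DecidableRel G.Adj]
    (h : G.IsRegularOfDegree 2) : G.IsCycles := fun v _ => by
  rw [Set.ncard_eq_toFinset_card', Set.toFinset_card, card_neighborSet_eq_degree, h v]

lemma Connected.exists_isHamiltonianCycle_of_isCycles [Finite V] [DecidableEq V]
    (hG : G.Connected) (hcyc : G.IsCycles) {v w : V} (hvw : G.Adj v w) :
    ∃ p : G.Walk v v, p.IsHamiltonianCycle := by
  obtain ⟨p, hp, hverts⟩ :=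
    hcyc.exists_cycle_toSubgraph_verts_eq_connectedComponentSupp (c := G.connectedComponentMk v)
      rfl ⟨w, hvw⟩
  refine ⟨p, hp.isHamiltonianCycle_of_forall_mem_support fun u => ?_⟩
  rw [← Walk.mem_verts_toSubgraph, hverts, ConnectedComponent.mem_supp_iff]
  exact ConnectedComponent.eq.mpr (hG.preconnected u v)

theorem IsEdgeConnected.isHamiltonian_of_ncard_edgeSet_le [Fintype V] [DecidableEq V]
    [Nonempty V] (hG : G.IsEdgeConnected 2) (hcard : G.edgeSet.ncard ≤ Fintype.card V) :
    G.IsHamiltonian := by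
  classical
  intro hV
  rw [← coe_edgeFinset, Set.ncard_coe_finset] at hcard
  have : Nontrivial V := Fintype.one_lt_card_iff_nontrivial.mp <| by
    have := Fintype.card_pos (α := V)
    lia
  have hreg : G.IsRegularOfDegree 2 :=
    isRegularOfDegree_of_le_degree (fun v => hG.le_degree) (by lia)
  obtain ⟨v⟩ := ‹Nonempty V›
  obtain ⟨w, hvw⟩ := G.degree_pos_iff_exists_adj v |>.mp (by rw [hreg v]; lia)
  exact ⟨v, (hG.connected two_ne_zero).exists_isHamiltonianCycle_of_isCycles hreg.isCycles hvw⟩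

end SimpleGraph

theorem stmt_0 {V : Type*} [Fintype V] [DecidableEq V] (G : SimpleGraph V) :
    G.IsHamiltonian ↔
      ∃ T : Set (Sym2 V), IsUSCS G G.edgeSet T ∧ T.ncard ≤ Fintype.card V := by
  simp only [isUSCS_edgeSet_iff]
  constructor
  · intro hG
    obtain hV | hV := eq_or_ne (Fintype.card V) 1
    · have : Unique V := (Fintype.card_eq_one_iff_nonempty_unique.mp hV).some
      exact ⟨∅, ⟨Set.empty_subset _, inferInstance, .of_subsingleton⟩, by simp⟩
    obtain ⟨a, p, hp⟩ := hG hV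
    refine ⟨p.edgeSet, ⟨p.edges_subset_edgeSet, ⟨a⟩, hp.isEdgeConnected_two_fromEdgeSet⟩, ?_⟩
    rw [hp.isTrail.ncard_edgeSet, hp.length_eq]
  · rintro ⟨T, ⟨hTG, hne, hT⟩, hcard⟩
    have hle : fromEdgeSet T ≤ G := (fromEdgeSet_le G).mpr (Set.sdiff_subset.trans hTG)
    refine (hT.isHamiltonian_of_ncard_edgeSet_le ?_).mono hle
    calc (fromEdgeSet T).edgeSet.ncard ≤ T.ncard :=
          Set.ncard_le_ncard (by simp [edgeSet_fromEdgeSet]) T.toFinite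
      _ ≤ Fintype.card V := hcard
end

section
/- Let G' be the disjoint union of two copies of a graph G joined by a single safe edge e₀. If G' has an unsafe spanning connected subgraph with at most 2k+1 edges, then G has an unsafe spanning connected subgraph with at most k edges. -/
open SimpleGraph

/-- Two disjoint copies of `G` joined by a single edge between the copy `Sum.inl v₀`
and the copy `Sum.inr v₀` of a fixed vertex `v₀`. -/
def twoCopies {V : Type*} (G : SimpleGraph V) (v₀ : V) : SimpleGraph (V ⊕ V) :=
  SimpleGraph.fromRel (fun a b =>
    (∃ x y, a = Sum.inl x ∧ b = Sum.inl y ∧ G.Adj x y) ∨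
    (∃ x y, a = Sum.inr x ∧ b = Sum.inr y ∧ G.Adj x y) ∨
    (a = Sum.inl v₀ ∧ b = Sum.inr v₀))

/-- The unsafe edges of the two-copies graph: the copies of the unsafe edges of `G`
(the joining edge is safe). -/
def twoCopiesUnsafe {V : Type*} (U : Set (Sym2 V)) : Set (Sym2 (V ⊕ V)) :=
  (Sym2.map Sum.inl '' U) ∪ (Sym2.map Sum.inr '' U)


section Aux

variable {V : Type*} (G : SimpleGraph V) (v₀ : V)

lemma twoCopies_adj_cross {x y : V} (h : (twoCopies G v₀).Adj (Sum.inl x) (Sum.inr y)) :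
    x = v₀ ∧ y = v₀ := by
  simp only [twoCopies, fromRel_adj] at h
  obtain ⟨-, h⟩ := h
  rcases h with (⟨a,b,h1,h2,_⟩|⟨a,b,h1,h2,_⟩|⟨h1,h2⟩)|(⟨a,b,h1,h2,_⟩|⟨a,b,h1,h2,_⟩|⟨h1,h2⟩) <;>
    simp_all

lemma twoCopies_adj_left {x y : V} (h : (twoCopies G v₀).Adj (Sum.inl x) (Sum.inl y)) :
    G.Adj x y := by
  simp only [twoCopies, fromRel_adj] at h
  obtain ⟨-, h⟩ := h
  rcases h with (⟨a,b,h1,h2,h3⟩|⟨a,b,h1,h2,_⟩|⟨h1,h2⟩)|(⟨a,b,h1,h2,h3⟩|⟨a,b,h1,h2,_⟩|⟨h1,h2⟩) <;>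
    (try simp_all) <;> exact h3.symm

lemma twoCopies_adj_right {x y : V} (h : (twoCopies G v₀).Adj (Sum.inr x) (Sum.inr y)) :
    G.Adj x y := by
  simp only [twoCopies, fromRel_adj] at h
  obtain ⟨-, h⟩ := h
  rcases h with (⟨a,b,h1,h2,h3⟩|⟨a,b,h1,h2,h3⟩|⟨h1,h2⟩)|(⟨a,b,h1,h2,h3⟩|⟨a,b,h1,h2,h3⟩|⟨h1,h2⟩) <;>
    (try simp_all) <;> exact h3.symm

lemma proj_reach_left (W : Set (Sym2 (V ⊕ V))) (hW : W ⊆ (twoCopies G v₀).edgeSet)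
    {a b : V ⊕ V} (p : (fromEdgeSet W).Walk a b) :
    (fromEdgeSet {f : Sym2 V | Sym2.map Sum.inl f ∈ W}).Reachable
      (Sum.elim id (fun _ => v₀) a) (Sum.elim id (fun _ => v₀) b) := by
  induction p with
  | nil => exact Reachable.refl _
  | @cons a c b h p ih =>
    rw [fromEdgeSet_adj] at h
    obtain ⟨hmem, hne⟩ := h
    cases a with
    | inl x =>
      cases c with
      | inl y =>
        refine Reachable.trans (Adj.reachable ?_) ih
        rw [fromEdgeSet_adj]
        refine ⟨?_, by simpa using hne⟩
        show Sym2.map Sum.inl s(x, y) ∈ W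
        simpa using hmem
      | inr y =>
        obtain ⟨hx, hy⟩ := twoCopies_adj_cross G v₀ ((mem_edgeSet _).mp (hW hmem))
        simpa [hx] using ih
    | inr x =>
      cases c with
      | inl y =>
        obtain ⟨hy, hx⟩ := twoCopies_adj_cross G v₀
          ((mem_edgeSet _).mp (hW (by rwa [Sym2.eq_swap] at hmem)))
        simpa [hy] using ih
      | inr y => simpa using ih

lemma proj_reach_right (W : Set (Sym2 (V ⊕ V))) (hW : W ⊆ (twoCopies G v₀).edgeSet)
    {a b : V ⊕ V} (p : (fromEdgeSet W).Walk a b) :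
    (fromEdgeSet {f : Sym2 V | Sym2.map Sum.inr f ∈ W}).Reachable
      (Sum.elim (fun _ => v₀) id a) (Sum.elim (fun _ => v₀) id b) := by
  induction p with
  | nil => exact Reachable.refl _
  | @cons a c b h p ih =>
    rw [fromEdgeSet_adj] at h
    obtain ⟨hmem, hne⟩ := h
    cases a with
    | inl x =>
      cases c with
      | inl y => simpa using ih
      | inr y =>
        obtain ⟨hx, hy⟩ := twoCopies_adj_cross G v₀ ((mem_edgeSet _).mp (hW hmem))
        simpa [hy] using ih
    | inr x =>
      cases c with
      | inl y =>
        obtain ⟨hy, hx⟩ := twoCopies_adj_cross G v₀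
          ((mem_edgeSet _).mp (hW (by rwa [Sym2.eq_swap] at hmem)))
        simpa [hx] using ih
      | inr y =>
        refine Reachable.trans (Adj.reachable ?_) ih
        rw [fromEdgeSet_adj]
        refine ⟨?_, by simpa using hne⟩
        show Sym2.map Sum.inr s(x, y) ∈ W
        simpa using hmem

lemma pullback_left (T' : Set (Sym2 (V ⊕ V))) (U : Set (Sym2 V))
    (h : IsUSCS (twoCopies G v₀) (twoCopiesUnsafe U) T') :
    IsUSCS G U {f | Sym2.map Sum.inl f ∈ T'} := by
  obtain ⟨hsub, hconn, hsafe⟩ := h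
  refine ⟨?_, ?_, ?_⟩
  · intro f hf
    induction f using Sym2.ind with
    | _ x y =>
      have h2 : Sym2.map Sum.inl s(x, y) ∈ (twoCopies G v₀).edgeSet := hsub hf
      rw [Sym2.map_pair_eq, mem_edgeSet] at h2
      exact (mem_edgeSet _).mpr (twoCopies_adj_left G v₀ h2)
  · have : Nonempty V := ⟨v₀⟩
    refine Connected.mk fun u v => ?_
    obtain ⟨p⟩ := hconn.preconnected (Sum.inl u) (Sum.inl v)
    simpa using proj_reach_left G v₀ T' hsub p
  · intro e he heU
    have hc := hsafe _ he (Or.inl ⟨e, heU, rfl⟩)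
    have hset : {f : Sym2 V | Sym2.map Sum.inl f ∈ T' \ {Sym2.map Sum.inl e}} =
        {f | Sym2.map Sum.inl f ∈ T'} \ {e} := by
      ext f
      simp only [Set.mem_setOf_eq, Set.mem_diff, Set.mem_singleton_iff]
      refine and_congr_right fun _ => not_congr ⟨fun hh => ?_, fun hh => by rw [hh]⟩
      exact Sym2.map.injective Sum.inl_injective hh
    rw [← hset]
    have : Nonempty V := ⟨v₀⟩
    refine Connected.mk fun u v => ?_
    obtain ⟨p⟩ := hc.preconnected (Sum.inl u) (Sum.inl v)
    simpa using proj_reach_left G v₀ _ (Set.diff_subset.trans hsub) p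

lemma pullback_right (T' : Set (Sym2 (V ⊕ V))) (U : Set (Sym2 V))
    (h : IsUSCS (twoCopies G v₀) (twoCopiesUnsafe U) T') :
    IsUSCS G U {f | Sym2.map Sum.inr f ∈ T'} := by
  obtain ⟨hsub, hconn, hsafe⟩ := h
  refine ⟨?_, ?_, ?_⟩
  · intro f hf
    induction f using Sym2.ind with
    | _ x y =>
      have h2 : Sym2.map Sum.inr s(x, y) ∈ (twoCopies G v₀).edgeSet := hsub hf
      rw [Sym2.map_pair_eq, mem_edgeSet] at h2
      exact (mem_edgeSet _).mpr (twoCopies_adj_right G v₀ h2)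
  · have : Nonempty V := ⟨v₀⟩
    refine Connected.mk fun u v => ?_
    obtain ⟨p⟩ := hconn.preconnected (Sum.inr u) (Sum.inr v)
    simpa using proj_reach_right G v₀ T' hsub p
  · intro e he heU
    have hc := hsafe _ he (Or.inr ⟨e, heU, rfl⟩)
    have hset : {f : Sym2 V | Sym2.map Sum.inr f ∈ T' \ {Sym2.map Sum.inr e}} =
        {f | Sym2.map Sum.inr f ∈ T'} \ {e} := by
      ext f
      simp only [Set.mem_setOf_eq, Set.mem_diff, Set.mem_singleton_iff]
      refine and_congr_right fun _ => not_congr ⟨fun hh => ?_, fun hh => by rw [hh]⟩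
      exact Sym2.map.injective Sum.inr_injective hh
    rw [← hset]
    have : Nonempty V := ⟨v₀⟩
    refine Connected.mk fun u v => ?_
    obtain ⟨p⟩ := hc.preconnected (Sum.inr u) (Sum.inr v)
    simpa using proj_reach_right G v₀ _ (Set.diff_subset.trans hsub) p

end Aux

theorem stmt_5 {V : Type*} [Fintype V] (G : SimpleGraph V) (S U : Set (Sym2 V))
    (hSU : S ∪ U = G.edgeSet) (hdisj : Disjoint S U) (v₀ : V) (k : ℕ)
    (hT' : ∃ T' : Set (Sym2 (V ⊕ V)),
      IsUSCS (twoCopies G v₀) (twoCopiesUnsafe U) T' ∧ T'.ncard ≤ 2 * k + 1) :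
    ∃ T : Set (Sym2 V), IsUSCS G U T ∧ T.ncard ≤ k := by
  obtain ⟨T', hUSCS, hcard⟩ := hT'
  set T₁ : Set (Sym2 V) := {f | Sym2.map Sum.inl f ∈ T'} with hT₁
  set T₂ : Set (Sym2 V) := {f | Sym2.map Sum.inr f ∈ T'} with hT₂
  have hUS1 := pullback_left G v₀ T' U hUSCS
  have hUS2 := pullback_right G v₀ T' U hUSCS
  have hsum : T₁.ncard + T₂.ncard ≤ 2 * k + 1 := by
    have himg1 : Sym2.map Sum.inl '' T₁ ⊆ T' := by rintro e ⟨f, hf, rfl⟩; exact hf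
    have himg2 : Sym2.map Sum.inr '' T₂ ⊆ T' := by rintro e ⟨f, hf, rfl⟩; exact hf
    have hdis : Disjoint (Sym2.map Sum.inl '' T₁) (Sym2.map Sum.inr '' T₂) := by
      rw [Set.disjoint_left]
      rintro e ⟨f, -, rfl⟩ ⟨g, -, hg⟩
      induction f using Sym2.ind with
      | _ x y =>
        induction g using Sym2.ind with
        | _ u v => simp [Sym2.map_pair_eq, Sym2.eq_iff] at hg
    calc T₁.ncard + T₂.ncard
        = ((Sym2.map Sum.inl '' T₁) ∪ (Sym2.map Sum.inr '' T₂)).ncard := by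
          rw [Set.ncard_union_eq hdis (Set.toFinite _) (Set.toFinite _),
            Set.ncard_image_of_injective _ (Sym2.map.injective Sum.inl_injective),
            Set.ncard_image_of_injective _ (Sym2.map.injective Sum.inr_injective)]
      _ ≤ T'.ncard := Set.ncard_le_ncard (Set.union_subset himg1 himg2) T'.toFinite
      _ ≤ 2 * k + 1 := hcard
  rcases le_or_gt T₁.ncard k with h | h
  · exact ⟨T₁, hUS1, h⟩
  · exact ⟨T₂, hUS2, by omega⟩
end

section
/- If an unsafe spanning connected subgraph T of a graph G contains a cycle consisting only of safe edges, then removing any single edge of that cycle from T yields another unsafe spanning connected subgraph of G. -/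
open SimpleGraph

/-- Deleting an edge that lies on a cycle preserves connectivity. -/
lemma connected_delete_of_cycle {V : Type*} {H : SimpleGraph V} (hc : H.Connected)
    {u : V} (p : H.Walk u u) (hp : p.IsCycle) {e : Sym2 V} (he : e ∈ p.edges) :
    (H \ SimpleGraph.fromEdgeSet {e}).Connected := by
  induction e with
  | h a b =>
    obtain ⟨hadj, hr⟩ := SimpleGraph.adj_and_reachable_delete_edges_iff_exists_cycle.mpr
      ⟨u, p, hp, he⟩
    have key : ∀ x y : V, H.Reachable x y →
        (H \ SimpleGraph.fromEdgeSet {s(a, b)}).Reachable x y := by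
      intro x y hxy
      obtain ⟨w⟩ := hxy
      induction w with
      | nil => exact SimpleGraph.Reachable.refl _
      | @cons c d _ hcd _ ih =>
        refine SimpleGraph.Reachable.trans ?_ ih
        by_cases hce : s(c, d) = s(a, b)
        · rw [Sym2.eq_iff] at hce
          rcases hce with ⟨rfl, rfl⟩ | ⟨rfl, rfl⟩
          · exact hr
          · exact hr.symm
        · exact SimpleGraph.Adj.reachable (by
            simp only [SimpleGraph.sdiff_adj, SimpleGraph.fromEdgeSet_adj,
              Set.mem_singleton_iff]
            exact ⟨hcd, fun h => hce h.1⟩)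
    haveI := hc.nonempty
    exact ⟨fun x y => key x y (hc.preconnected x y)⟩

theorem stmt_6 {V : Type*} (G : SimpleGraph V) (S U : Set (Sym2 V))
    (hSU : S ∪ U = G.edgeSet) (hdisj : Disjoint S U)
    (T : Set (Sym2 V)) (hT : IsUSCS G U T)
    (v : V) (p : (SimpleGraph.fromEdgeSet T).Walk v v) (hp : p.IsCycle)
    (hsafe : ∀ e ∈ p.edges, e ∈ S)
    (e : Sym2 V) (he : e ∈ p.edges) :
    IsUSCS G U (T \ {e}) := by
  obtain ⟨hTsub, hTconn, hTU⟩ := hT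
  refine ⟨(Set.diff_subset).trans hTsub, ?_, ?_⟩
  · rw [SimpleGraph.fromEdgeSet_sdiff]
    exact connected_delete_of_cycle hTconn p hp he
  · intro f hf hfU
    have hfT : f ∈ T := hf.1
    have hconn := hTU f hfT hfU
    -- transfer the cycle to fromEdgeSet (T \ {f})
    have hedges : ∀ g ∈ p.edges, g ∈ (SimpleGraph.fromEdgeSet (T \ {f})).edgeSet := by
      intro g hg
      have hgT : g ∈ (SimpleGraph.fromEdgeSet T).edgeSet := p.edges_subset_edgeSet hg
      rw [SimpleGraph.edgeSet_fromEdgeSet] at hgT ⊢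
      refine ⟨⟨hgT.1, ?_⟩, hgT.2⟩
      intro hgf
      exact hdisj.ne_of_mem (hsafe g hg) hfU (hgf)
    have hcyc := hp.transfer hedges
    have he' : e ∈ (p.transfer _ hedges).edges := by
      rw [SimpleGraph.Walk.edges_transfer]; exact he
    have hconn2 := connected_delete_of_cycle hconn _ hcyc he'
    have hset : (T \ {e}) \ {f} = (T \ {f}) \ {e} := by
      ext x; simp; tauto
    rw [hset, SimpleGraph.fromEdgeSet_sdiff]
    exact hconn2
end

section
/- Let G = (V, S, U) be a graph with an ear decomposition (P₀, …, P_q, P_{q+1}, …, P_t) where P_{q+1}, …, P_t are exactly the trivial ears. Then the edge set T = E(P₀) ∪ … ∪ E(P_q) is an unsafe spanning connected subgraph of G, i.e., T is spanning, connected, and T \ {e} is connected for every unsafe edge e ∈ T. -/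
open SimpleGraph

/-- An ear: a walk in `G` packaged with its endpoints. -/
def Ear {V : Type*} (G : SimpleGraph V) : Type _ := Σ (u v : V), G.Walk u v

/-- The vertex set of an ear. -/
def earVerts {V : Type*} {G : SimpleGraph V} (e : Ear G) : Set V := {x | x ∈ e.2.2.support}

/-- The edge set of an ear. -/
def earEdges {V : Type*} {G : SimpleGraph V} (e : Ear G) : Set (Sym2 V) := {x | x ∈ e.2.2.edges}

/-- The size of an ear is its number of edges. -/
def earSize {V : Type*} {G : SimpleGraph V} (e : Ear G) : ℕ := e.2.2.length

/-- The ear is a cycle. -/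
def IsCycleEar {V : Type*} {G : SimpleGraph V} (e : Ear G) : Prop :=
  ∃ h : e.2.1 = e.1, (e.2.2.copy rfl h).IsCycle

/-- `e` is an ear that can be attached to the already constructed part on vertex set `X`:
either a cycle sharing exactly one vertex (its base point) with `X`, or a path whose
two (distinct) endpoints lie in `X` and whose internal vertices avoid `X`. -/
def IsEarOver {V : Type*} {G : SimpleGraph V} (X : Set V) (e : Ear G) : Prop :=
  (IsCycleEar e ∧ earVerts e ∩ X = {e.1}) ∨
  (e.1 ≠ e.2.1 ∧ e.2.2.IsPath ∧ earVerts e ∩ X = {e.1, e.2.1})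

/-- The vertices of the ears preceding index `i` in the list `L`. -/
def prevVerts {V : Type*} {G : SimpleGraph V} (L : List (Ear G)) (i : ℕ) : Set V :=
  {x | ∃ j, ∃ hj : j < L.length, j < i ∧ x ∈ earVerts (L.get ⟨j, hj⟩)}

/-- `L` is an ear decomposition of `G`: the first ear is a cycle, the ears are pairwise
edge-disjoint, every later ear is attached to the union of the earlier ones, and the
ears cover all vertices and edges of `G`. -/
def IsEarDecomp {V : Type*} (G : SimpleGraph V) (L : List (Ear G)) : Prop :=
  (∃ h0 : 0 < L.length, IsCycleEar (L.get ⟨0, h0⟩)) ∧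
  (∀ i j (hi : i < L.length) (hj : j < L.length), i ≠ j →
    Disjoint (earEdges (L.get ⟨i, hi⟩)) (earEdges (L.get ⟨j, hj⟩))) ∧
  (∀ i (hi : i < L.length), 0 < i → IsEarOver (prevVerts L i) (L.get ⟨i, hi⟩)) ∧
  (∀ x : V, ∃ i, ∃ hi : i < L.length, x ∈ earVerts (L.get ⟨i, hi⟩)) ∧
  (G.edgeSet = {e | ∃ i, ∃ hi : i < L.length, e ∈ earEdges (L.get ⟨i, hi⟩)})


section EarAux

variable {V : Type*} {G : SimpleGraph V}

lemma reachable_of_walk {T' : Set (Sym2 V)} {u v : V} (W : G.Walk u v)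
    (h : ∀ e ∈ W.edges, e ∈ T') : (fromEdgeSet T').Reachable u v := by
  induction W with
  | nil => exact Reachable.refl _
  | @cons a b c hadj p ih =>
    refine Reachable.trans ?_ (ih fun e he => h e (by simp [he]))
    exact Adj.reachable (by rw [fromEdgeSet_adj]; exact ⟨h _ (by simp), hadj.ne⟩)

lemma reach_end {u v : V} (W : G.Walk u v) (hW : W.edges.Nodup) (f : Sym2 V) :
    ∀ x ∈ W.support,
      (fromEdgeSet ({e | e ∈ W.edges} \ {f})).Reachable x u ∨
      (fromEdgeSet ({e | e ∈ W.edges} \ {f})).Reachable x v := by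
  classical
  induction W with
  | nil =>
    intro x hx; left
    simp only [Walk.support_nil, List.mem_singleton] at hx
    subst hx; exact Reachable.refl _
  | @cons a b c hadj p ih =>
    intro x hx
    rw [Walk.support_cons, List.mem_cons] at hx
    rcases hx with rfl | hx
    · left; exact Reachable.refl _
    have hsub : ({e | e ∈ p.edges} : Set (Sym2 V)) \ {f} ⊆
        {e | e ∈ (Walk.cons hadj p).edges} \ {f} := by
      intro e he
      exact ⟨by simp only [Walk.edges_cons, List.mem_cons, Set.mem_setOf_eq]; exact Or.inr he.1, he.2⟩
    rw [Walk.edges_cons] at hW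
    have hnd := List.nodup_cons.mp hW
    by_cases hf : s(a, b) = f
    · right
      refine reachable_of_walk (p.dropUntil x hx) fun e he => ?_
      have hep : e ∈ p.edges := Walk.edges_dropUntil_subset p hx he
      refine ⟨by simp [hep], ?_⟩
      intro hef
      rw [Set.mem_singleton_iff] at hef
      exact hnd.1 (by rw [hf, ← hef]; exact hep)
    · rcases ih hnd.2 x hx with h1 | h2
      · left
        refine (h1.mono (fromEdgeSet_mono hsub)).trans (Adj.reachable ?_)
        rw [fromEdgeSet_adj]
        refine ⟨⟨?_, ?_⟩, hadj.ne.symm⟩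
        · simp [Sym2.eq_swap]
        · simpa [Sym2.eq_swap] using hf
      · right; exact h2.mono (fromEdgeSet_mono hsub)

lemma support_of_length_one {u v : V} (W : G.Walk u v) (h : W.length = 1) :
    ∀ x ∈ W.support, x = u ∨ x = v := by
  cases W with
  | nil => simp at h
  | cons hadj p =>
    cases p with
    | nil => intro x hx; simpa using hx
    | cons h2 p2 => simp [Walk.length_cons] at h

lemma earOver_facts {X : Set V} {e : Ear G} (h : IsEarOver X e) :
    e.2.2.edges.Nodup ∧ e.1 ∈ X ∧ e.2.1 ∈ X := by
  rcases h with ⟨⟨hp, hc⟩, hX⟩ | ⟨hne, hp, hX⟩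
  · refine ⟨by simpa [Walk.edges_copy] using hc.isTrail.edges_nodup, ?_, ?_⟩
    · have : e.1 ∈ earVerts e ∩ X := hX.symm ▸ Set.mem_singleton _
      exact this.2
    · have h1 : e.1 ∈ earVerts e ∩ X := hX.symm ▸ Set.mem_singleton _
      rw [hp]; exact h1.2
  · refine ⟨hp.isTrail.edges_nodup, ?_, ?_⟩
    · exact (hX.symm ▸ (Set.mem_insert _ _) : e.1 ∈ earVerts e ∩ X).2
    · exact (hX.symm ▸ (Set.mem_insert_iff.mpr (Or.inr rfl)) : e.2.1 ∈ earVerts e ∩ X).2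

end EarAux

theorem stmt_8 {V : Type*} [Fintype V] (G : SimpleGraph V) (S U : Set (Sym2 V))
    (hSU : S ∪ U = G.edgeSet) (hdisj : Disjoint S U)
    (L : List (Ear G)) (hL : IsEarDecomp G L) (q : ℕ) (hq : q < L.length)
    (hnontriv : ∀ i (hi : i < L.length), i ≤ q → earSize (L.get ⟨i, hi⟩) ≠ 1)
    (htriv : ∀ i (hi : i < L.length), q < i → earSize (L.get ⟨i, hi⟩) = 1) :
    IsUSCS G U {e | ∃ i, ∃ hi : i < L.length, i ≤ q ∧ e ∈ earEdges (L.get ⟨i, hi⟩)} := by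
  classical
  obtain ⟨⟨h0, hcyc0⟩, hdisjE, hover, hspan, hedges⟩ := hL
  set T : Set (Sym2 V) := {e | ∃ i, ∃ hi : i < L.length, i ≤ q ∧ e ∈ earEdges (L.get ⟨i, hi⟩)}
    with hTdef
  have hearT : ∀ i (hi : i < L.length), i ≤ q → earEdges (L.get ⟨i, hi⟩) ⊆ T :=
    fun i hi hiq e he => ⟨i, hi, hiq, he⟩
  -- key invariant: every vertex on the first k+1 ears reaches the base vertex,
  -- even after removing an arbitrary edge f
  have key : ∀ k, k ≤ q → ∀ f : Sym2 V, ∀ x ∈ prevVerts L (k+1),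
      (fromEdgeSet (T \ {f})).Reachable x (L.get ⟨0, h0⟩).1 := by
    intro k
    induction k with
    | zero =>
      intro _ f x hx
      obtain ⟨j, hj, hj1, hx⟩ := hx
      have hj0 : j = 0 := by omega
      subst hj0
      obtain ⟨heq, hcyc⟩ := hcyc0
      have hnd : (L.get ⟨0, h0⟩).2.2.edges.Nodup := by
        simpa [Walk.edges_copy] using hcyc.isTrail.edges_nodup
      have hx' : x ∈ (L.get ⟨0, h0⟩).2.2.support := hx
      have hsub : ({e | e ∈ (L.get ⟨0, h0⟩).2.2.edges} : Set (Sym2 V)) \ {f} ⊆ T \ {f} :=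
        fun e he => ⟨hearT 0 h0 (Nat.zero_le q) he.1, he.2⟩
      rcases reach_end (L.get ⟨0, h0⟩).2.2 hnd f x hx' with h1 | h2
      · exact h1.mono (fromEdgeSet_mono hsub)
      · have h3 := h2.mono (fromEdgeSet_mono hsub)
        rwa [heq] at h3
    | succ k ih =>
      intro hk1 f x hx
      have hk : k ≤ q := Nat.le_of_succ_le hk1
      obtain ⟨j, hj, hjlt, hx⟩ := hx
      by_cases hjk : j < k + 1
      · exact ih hk f x ⟨j, hj, hjk, hx⟩
      · have hjeq : j = k + 1 := by omega
        subst hjeq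
        have hov := hover (k+1) hj (Nat.succ_pos k)
        obtain ⟨hnd, hu, hv⟩ := earOver_facts hov
        have hsub : ({e | e ∈ (L.get ⟨k+1, hj⟩).2.2.edges} : Set (Sym2 V)) \ {f} ⊆ T \ {f} :=
          fun e he => ⟨hearT (k+1) hj hk1 he.1, he.2⟩
        rcases reach_end (L.get ⟨k+1, hj⟩).2.2 hnd f x hx with h1 | h2
        · exact (h1.mono (fromEdgeSet_mono hsub)).trans (ih hk f _ hu)
        · exact (h2.mono (fromEdgeSet_mono hsub)).trans (ih hk f _ hv)
  -- spanning: every ear's vertices lie among the vertices of the first q+1 ears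
  have spanning : ∀ i (hi : i < L.length), earVerts (L.get ⟨i, hi⟩) ⊆ prevVerts L (q+1) := by
    intro i
    induction i using Nat.strong_induction_on with
    | _ i IH =>
      intro hi x hx
      by_cases hiq : i ≤ q
      · exact ⟨i, hi, by omega, hx⟩
      · push_neg at hiq
        have hov := hover i hi (by omega)
        have hsz : (L.get ⟨i, hi⟩).2.2.length = 1 := htriv i hi hiq
        rcases hov with ⟨⟨heq, hcyc⟩, _⟩ | ⟨hne, hpath, hX⟩
        · have h3 : 3 ≤ (L.get ⟨i, hi⟩).2.2.length := by
            simpa [Walk.length_copy] using hcyc.three_le_length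
          omega
        · have hx2 := support_of_length_one (L.get ⟨i, hi⟩).2.2 hsz x hx
          have hend1 : (L.get ⟨i, hi⟩).1 ∈ prevVerts L i :=
            (hX.symm ▸ Set.mem_insert _ _ :
              (L.get ⟨i, hi⟩).1 ∈ earVerts (L.get ⟨i, hi⟩) ∩ prevVerts L i).2
          have hend2 : (L.get ⟨i, hi⟩).2.1 ∈ prevVerts L i :=
            (hX.symm ▸ Set.mem_insert_iff.mpr (Or.inr rfl) :
              (L.get ⟨i, hi⟩).2.1 ∈ earVerts (L.get ⟨i, hi⟩) ∩ prevVerts L i).2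
          have hmem : x ∈ prevVerts L i := by
            rcases hx2 with rfl | rfl
            exacts [hend1, hend2]
          obtain ⟨j, hj', hji, hxj⟩ := hmem
          exact IH j (by omega) hj' hxj
  have reachT : ∀ f : Sym2 V, ∀ x : V,
      (fromEdgeSet (T \ {f})).Reachable x (L.get ⟨0, h0⟩).1 := by
    intro f x
    obtain ⟨i, hi, hx⟩ := hspan x
    exact key q le_rfl f x (spanning i hi hx)
  refine ⟨?_, ?_, ?_⟩
  · intro e he
    obtain ⟨i, hi, _, hei⟩ := he
    rw [hedges]
    exact ⟨i, hi, hei⟩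
  · rw [connected_iff]
    refine ⟨fun u v => ?_, ⟨(L.get ⟨0, h0⟩).1⟩⟩
    have hmono : fromEdgeSet (T \ {s((L.get ⟨0, h0⟩).1, (L.get ⟨0, h0⟩).1)}) ≤ fromEdgeSet T :=
      fromEdgeSet_mono Set.diff_subset
    exact ((reachT _ u).mono hmono).trans (((reachT _ v).mono hmono)).symm
  · intro e _ _
    rw [connected_iff]
    exact ⟨fun u v => (reachT e u).trans (reachT e v).symm, ⟨(L.get ⟨0, h0⟩).1⟩⟩
end

section
/- Every 2-edge-connected graph G on n ≥ 4 vertices has an unsafe spanning connected subgraph with at most 2n − 4 edges. -/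
open SimpleGraph

/-- A graph is 2-edge-connected if it is connected and remains connected after
deletion of any single edge. -/
def TwoEdgeConnected {V : Type*} (G : SimpleGraph V) : Prop :=
  G.Connected ∧ ∀ e ∈ G.edgeSet, (G.deleteEdges {e}).Connected

/-! Ear decomposition with a counting invariant. Grow a vertex set `W` together with an edge
set `T` such that any two vertices of `W` stay connected in `T` after deleting any one edge.
Attaching an ear with `ℓ ≥ 1` new vertices costs `ℓ + 1 ≤ 2ℓ` edges, so the slack
`2|W| - |T|` never decreases, and it suffices to start with slack `4`. A cycle of length at
least `4` has that slack. A triangle has slack `3`, and the next ear either returns to its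
starting vertex, when it is a cycle with at least two new vertices and adds `1` to the slack,
or joins two distinct vertices of the triangle and closes through the third one to a cycle of
length at least `4`. -/

namespace SimpleGraph

open Finset

variable {V : Type*} {G : SimpleGraph V} {a b u v w x y : V}

namespace Walk

lemma ncard_edgeSet_le_length (p : G.Walk u v) : p.edgeSet.ncard ≤ p.length := by
  classical
  rw [← coe_edges_toFinset, Set.ncard_coe_finset, ← length_edges]
  exact List.toFinset_card_le _

lemma exists_eq_append_of_end_mem {S : Set V} (p : G.Walk u v) (hv : v ∈ S) :
    ∃ b ∈ S, ∃ (q : G.Walk u b) (r : G.Walk b v), p = q.append r ∧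
      ∀ x ∈ q.support, x ∈ S → x = b := by
  induction p with
  | nil => exact ⟨_, hv, nil, nil, rfl, by simp⟩
  | @cons u c v h p ih =>
    by_cases hu : u ∈ S
    · exact ⟨u, hu, nil, cons h p, rfl, by simp⟩
    · obtain ⟨b, hb, q, r, rfl, hq⟩ := ih hv
      refine ⟨b, hb, cons h q, r, rfl, fun x hx hxS => ?_⟩
      rw [support_cons, List.mem_cons] at hx
      rcases hx with rfl | hx
      · exact absurd hxS hu
      · exact hq x hx hxS

lemma IsPath.card_add_length_le_card_union [DecidableEq V] {W : Finset V} {p : G.Walk u v}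
    (hp : p.IsPath) (hpW : ∀ x ∈ p.support, x ∈ W → x = v) :
    #W + p.length ≤ #(W ∪ p.support.toFinset) := by
  have hsub : p.support.toFinset.erase v ⊆ p.support.toFinset \ W := fun x hx => by
    rw [mem_erase, List.mem_toFinset] at hx
    exact mem_sdiff.mpr ⟨List.mem_toFinset.mpr hx.2, fun hxW => hx.1 (hpW x hx.2 hxW)⟩
  have hcard : #(p.support.toFinset.erase v) = p.length := by
    rw [card_erase_of_mem (by simp), List.toFinset_card_of_nodup hp.support_nodup,
      length_support, Nat.add_sub_cancel]
  calc #W + p.length ≤ #W + #(p.support.toFinset \ W) := by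
        rw [← hcard]
        gcongr
    _ = #(W ∪ p.support.toFinset) := by rw [add_comm, card_sdiff_add_card, union_comm]

lemma IsTrail.isEdgeReachable_two_fromEdgeSet {s : Set (Sym2 V)} {p : G.Walk a b}
    (hp : p.IsTrail) (hs : p.edgeSet ⊆ s) (hab : (fromEdgeSet s).IsEdgeReachable 2 a b)
    (hx : x ∈ p.support) (hy : y ∈ p.support) : (fromEdgeSet s).IsEdgeReachable 2 x y := by
  have hp' : ∀ e ∈ p.edges, e ∈ (fromEdgeSet s).edgeSet := fun e he => by
    rw [edgeSet_fromEdgeSet]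
    exact ⟨hs he, G.not_isDiag_of_mem_edgeSet (p.edges_subset_edgeSet he)⟩
  have htrail : (p.transfer _ hp').IsTrail := by
    rw [isTrail_def, edges_transfer]
    exact hp.edges_nodup
  exact htrail.isEdgeReachable_two_of_isEdgeReachable_two hab
    (by rwa [support_transfer]) (by rwa [support_transfer])

lemma IsCycle.length_le_card_toFinset_support [DecidableEq V] {c : G.Walk v v}
    (hc : c.IsCycle) : c.length ≤ #c.support.toFinset :=
  calc c.length = #c.support.tail.toFinset := by
        rw [List.toFinset_card_of_nodup hc.support_nodup, List.length_tail, length_support,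
          Nat.add_sub_cancel]
    _ ≤ #c.support.toFinset := card_le_card fun x hx => by
        simpa using List.mem_of_mem_tail (List.mem_toFinset.mp hx)

lemma IsCycle.isNClique_three [DecidableEq V] {c : G.Walk v v} (hc : c.IsCycle)
    (h3 : c.length = 3) : G.IsNClique 3 c.support.toFinset := by
  match c, hc, h3 with
  | .cons hab (.cons hbc (.cons hca .nil)), _, _ =>
    convert is3Clique_triple_iff.mpr ⟨hab, hca.symm, hbc⟩ using 1
    ext
    simp only [support_cons, support_nil, List.mem_toFinset, List.mem_cons, List.not_mem_nil,
      mem_insert, mem_singleton]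
    tauto

end Walk

lemma IsNClique.exists_adj_adj [DecidableEq V] {s : Finset V} (hs : G.IsNClique 3 s)
    (ha : a ∈ s) (hb : b ∈ s) (hab : a ≠ b) : ∃ m ∈ s, G.Adj b m ∧ G.Adj m a := by
  obtain ⟨m, hm⟩ : ((s.erase a).erase b).Nonempty := by
    rw [← card_pos, card_erase_of_mem (mem_erase.mpr ⟨hab.symm, hb⟩), card_erase_of_mem ha,
      hs.card_eq]
    norm_num
  obtain ⟨hmb, hma, hms⟩ : m ≠ b ∧ m ≠ a ∧ m ∈ s := by simpa using hm
  exact ⟨m, hms, hs.isClique hb hms hmb.symm, hs.isClique hms ha hma⟩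

structure TwoEdgeConnects (G : SimpleGraph V) (T : Set (Sym2 V)) (W : Finset V) : Prop where
  subset_edgeSet : T ⊆ G.edgeSet
  isEdgeReachable : ∀ x ∈ W, ∀ y ∈ W, (fromEdgeSet T).IsEdgeReachable 2 x y

structure IsEar (W : Finset V) (haw : G.Adj a w) (q : G.Walk w b) : Prop where
  start_mem : a ∈ W
  snd_notMem : w ∉ W
  end_mem : b ∈ W
  isPath : q.IsPath
  edge_notMem : s(a, w) ∉ q.edges
  eq_end_of_mem : ∀ x ∈ q.support, x ∈ W → x = b

namespace TwoEdgeConnects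

variable [DecidableEq V] {T : Set (Sym2 V)} {W : Finset V}

lemma of_isCycle {c : G.Walk v v} (hc : c.IsCycle) :
    TwoEdgeConnects G c.edgeSet c.support.toFinset where
  subset_edgeSet := c.edges_subset_edgeSet
  isEdgeReachable _ hx _ hy := hc.isTrail.isEdgeReachable_two_fromEdgeSet subset_rfl .rfl
    (List.mem_toFinset.mp hx) (List.mem_toFinset.mp hy)

lemma union_of_isTrail (h : TwoEdgeConnects G T W) {p : G.Walk a b} (hp : p.IsTrail)
    (ha : a ∈ W) (hb : b ∈ W) :
    TwoEdgeConnects G (T ∪ p.edgeSet) (W ∪ p.support.toFinset) where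
  subset_edgeSet := Set.union_subset h.subset_edgeSet p.edges_subset_edgeSet
  isEdgeReachable := by
    have hW : ∀ x ∈ W, ∀ y ∈ W, (fromEdgeSet (T ∪ p.edgeSet)).IsEdgeReachable 2 x y :=
      fun x hx y hy => (h.isEdgeReachable x hx y hy).mono (fromEdgeSet_mono Set.subset_union_left)
    have hreach : ∀ x ∈ W ∪ p.support.toFinset,
        (fromEdgeSet (T ∪ p.edgeSet)).IsEdgeReachable 2 x a := by
      intro x hx
      rcases mem_union.mp hx with hx | hx
      · exact hW x hx a ha
      · exact hp.isEdgeReachable_two_fromEdgeSet Set.subset_union_right (hW a ha b hb)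
          (List.mem_toFinset.mp hx) p.start_mem_support
    exact fun x hx y hy => (hreach x hx).trans (hreach y hy).symm

end TwoEdgeConnects

namespace IsEar

variable {W : Finset V} {haw : G.Adj a w} {q : G.Walk w b}

lemma one_le_length (he : IsEar W haw q) : 1 ≤ q.length := by
  by_contra! h0
  have hwb : w = b := Walk.eq_of_length_eq_zero (Nat.lt_one_iff.mp h0)
  exact he.snd_notMem (hwb ▸ he.end_mem)

lemma isTrail (he : IsEar W haw q) : (Walk.cons haw q).IsTrail :=
  (Walk.isTrail_cons haw q).mpr ⟨he.isPath.isTrail, he.edge_notMem⟩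

lemma isCycle_cons_concat {m : V} (he : IsEar W haw q) (hab : a ≠ b) (hm : m ∈ W)
    (hbm : G.Adj b m) (hma : G.Adj m a) :
    (Walk.cons hma (Walk.cons haw (q.concat hbm))).IsCycle := by
  have hmq : m ∉ q.support := fun h => hbm.ne (he.eq_end_of_mem m h hm).symm
  have haq : a ∉ q.support := fun h => hab (he.eq_end_of_mem a h he.start_mem)
  have hmw : m ≠ w := fun h => he.snd_notMem (h ▸ hm)
  have hmaq : s(m, a) ∉ q.edges := fun h => hmq (q.fst_mem_support_of_mem_edges h)
  rw [Walk.cons_isCycle_iff, Walk.cons_isPath_iff]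
  refine ⟨⟨he.isPath.concat hmq hbm, ?_⟩, ?_⟩
  · simp [Walk.support_concat, haq, hma.ne.symm]
  · simp [Walk.edges_concat, hmaq, hma.ne, hmw, hab, hbm.ne.symm]

variable [DecidableEq V]

lemma twoEdgeConnects {T : Set (Sym2 V)} (he : IsEar W haw q) (h : TwoEdgeConnects G T W) :
    TwoEdgeConnects G (T ∪ (Walk.cons haw q).edgeSet) (W ∪ q.support.toFinset) := by
  have hW : W ∪ (Walk.cons haw q).support.toFinset = W ∪ q.support.toFinset := by
    rw [Walk.support_cons, List.toFinset_cons, union_insert,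
      insert_eq_of_mem (mem_union_left _ he.start_mem)]
  exact hW ▸ h.union_of_isTrail he.isTrail he.start_mem he.end_mem

end IsEar

lemma TwoEdgeConnects.exists_ssuperset_of_isEar [DecidableEq V] {T : Set (Sym2 V)}
    {W : Finset V} {k : ℕ} (h : TwoEdgeConnects G T W) {haw : G.Adj a w} {q : G.Walk w b}
    (he : IsEar W haw q) (hk : T.ncard + k + 1 ≤ 2 * #W + q.length) :
    ∃ W' T', W ⊂ W' ∧ TwoEdgeConnects G T' W' ∧ T'.ncard + k ≤ 2 * #W' := by
  refine ⟨_, _, ?_, he.twoEdgeConnects h, ?_⟩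
  · exact (ssubset_iff_of_subset subset_union_left).mpr
      ⟨w, mem_union_right _ (List.mem_toFinset.mpr q.start_mem_support), he.snd_notMem⟩
  · have hT : (T ∪ (Walk.cons haw q).edgeSet).ncard ≤ T.ncard + (q.length + 1) :=
      (Set.ncard_union_le _ _).trans (Nat.add_le_add_left (Walk.ncard_edgeSet_le_length _) _)
    have hW := he.isPath.card_add_length_le_card_union he.eq_end_of_mem
    omega

variable [Fintype V] [DecidableEq V]

lemma _root_.TwoEdgeConnected.exists_isEar (hG : TwoEdgeConnected G) {W : Finset V}
    (hW : W.Nonempty) (hWV : W ≠ univ) :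
    ∃ (a w b : V) (haw : G.Adj a w) (q : G.Walk w b), IsEar W haw q := by
  obtain ⟨u, -, hu⟩ := exists_of_ssubset (ssubset_univ_iff.mpr hWV)
  obtain ⟨x, hx⟩ := hW
  obtain ⟨⟨⟨a, w⟩, haw⟩, -, ha, hw⟩ :=
    (hG.1.preconnected x u).some.exists_boundary_dart (W : Set V) hx hu
  obtain ⟨p, hp⟩ := reachable_deleteEdges_iff_exists_walk.mp
    ((hG.2 s(a, w) haw).preconnected w a)
  obtain ⟨b, hb, q, r, hqr, hq⟩ :=
    (p.toPath : G.Walk w a).exists_eq_append_of_end_mem (S := (W : Set V)) ha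
  refine ⟨a, w, b, haw, q, ha, hw, hb, (hqr ▸ p.toPath.property).of_append_left, ?_, hq⟩
  intro hmem
  apply hp (p.edges_toPath_subset_edges _)
  rw [hqr, Walk.edges_append]
  exact List.mem_append_left _ hmem

lemma TwoEdgeConnects.exists_univ {k : ℕ} (hG : TwoEdgeConnected G) {T : Set (Sym2 V)}
    {W : Finset V} (h : TwoEdgeConnects G T W) (hW : W.Nonempty) (hk : T.ncard + k ≤ 2 * #W) :
    ∃ T', TwoEdgeConnects G T' univ ∧ T'.ncard + k ≤ 2 * Fintype.card V := by
  by_cases hWV : W = univ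
  · subst hWV
    exact ⟨T, h, hk⟩
  obtain ⟨a, w, b, haw, q, he⟩ := hG.exists_isEar hW hWV
  obtain ⟨W', T', hWW', h', hk'⟩ :=
    h.exists_ssuperset_of_isEar (k := k) he (by linarith [he.one_le_length])
  exact exists_univ hG h' (hW.mono hWW'.subset) hk'
termination_by #Wᶜ
decreasing_by exact card_lt_card (compl_ssubset_compl.mpr hWW')

omit [DecidableEq V] in
lemma TwoEdgeConnects.isUSCS [Nonempty V] {T : Set (Sym2 V)} (h : TwoEdgeConnects G T univ)
    (U : Set (Sym2 V)) : IsUSCS G U T := by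
  have hdel : ∀ e, (fromEdgeSet (T \ {e})).Connected := fun e => by
    refine (connected_iff _).mpr ⟨fun x y => ?_, inferInstance⟩
    rw [fromEdgeSet_sdiff]
    exact isEdgeReachable_two.mp (h.isEdgeReachable x (mem_univ _) y (mem_univ _)) e
  obtain ⟨v⟩ := ‹Nonempty V›
  exact ⟨h.subset_edgeSet, (hdel s(v, v)).mono (fromEdgeSet_mono Set.sdiff_subset),
    fun e _ _ => hdel e⟩

omit [Fintype V] in
lemma exists_twoEdgeConnects_four_le_of_isCycle {c : G.Walk v v} (hc : c.IsCycle)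
    (h4 : 4 ≤ c.length) :
    ∃ (W : Finset V) (T : Set (Sym2 V)), W.Nonempty ∧ TwoEdgeConnects G T W ∧
      T.ncard + 4 ≤ 2 * #W := by
  refine ⟨_, _, ⟨v, by simp⟩, .of_isCycle hc, ?_⟩
  linarith [c.ncard_edgeSet_le_length, hc.length_le_card_toFinset_support]

lemma _root_.TwoEdgeConnected.exists_twoEdgeConnects_four_le (hG : TwoEdgeConnected G)
    (hn : 4 ≤ Fintype.card V) :
    ∃ (W : Finset V) (T : Set (Sym2 V)), W.Nonempty ∧ TwoEdgeConnects G T W ∧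
      T.ncard + 4 ≤ 2 * #W := by
  have : Nontrivial V := Fintype.one_lt_card_iff_nontrivial.mp (by omega)
  obtain ⟨x, -⟩ := exists_pair_ne V
  obtain ⟨y, hxy⟩ := hG.1.preconnected.exists_adj_of_nontrivial x
  obtain ⟨v, c, hc, -⟩ := adj_and_reachable_delete_edges_iff_exists_cycle.mp
    ⟨hxy, (hG.2 _ hxy).preconnected x y⟩
  by_cases h4 : 4 ≤ c.length
  · exact exists_twoEdgeConnects_four_le_of_isCycle hc h4
  have h3 : c.length = 3 := by linarith [hc.three_le_length]
  have hclique := hc.isNClique_three h3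
  have hW : c.support.toFinset.Nonempty := ⟨v, by simp⟩
  have hWV : c.support.toFinset ≠ univ := fun h => by
    have := hclique.card_eq
    rw [h, card_univ] at this
    omega
  have hT : c.edgeSet.ncard + 3 ≤ 2 * #c.support.toFinset := by
    linarith [c.ncard_edgeSet_le_length, hc.length_le_card_toFinset_support]
  obtain ⟨a, w, b, haw, q, he⟩ := hG.exists_isEar hW hWV
  rcases eq_or_ne a b with rfl | hab
  · have hq := ((Walk.cons_isCycle_iff q haw).mpr ⟨he.isPath, he.edge_notMem⟩).three_le_length
    obtain ⟨W', T', hWW', h', hk'⟩ :=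
      (TwoEdgeConnects.of_isCycle hc).exists_ssuperset_of_isEar (k := 4) he
        (by simp only [Walk.length_cons] at hq; omega)
    exact ⟨W', T', hW.mono hWW'.subset, h', hk'⟩
  · obtain ⟨m, hm, hbm, hma⟩ := hclique.exists_adj_adj he.start_mem he.end_mem hab
    exact exists_twoEdgeConnects_four_le_of_isCycle (he.isCycle_cons_concat hab hm hbm hma)
      (by simpa using he.one_le_length)

end SimpleGraph

theorem stmt_10_general {V : Type*} [Fintype V] (G : SimpleGraph V) (U : Set (Sym2 V))
    (h2ec : TwoEdgeConnected G) (hn : 4 ≤ Fintype.card V) :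
    ∃ T : Set (Sym2 V), IsUSCS G U T ∧ T.ncard ≤ 2 * Fintype.card V - 4 := by
  classical
  obtain ⟨W, T, hW, hT, hcard⟩ := h2ec.exists_twoEdgeConnects_four_le hn
  obtain ⟨T', hT', hcard'⟩ := hT.exists_univ h2ec hW hcard
  have : Nonempty V := Fintype.card_pos_iff.mp (by omega)
  exact ⟨T', hT'.isUSCS U, by omega⟩

theorem stmt_10 {V : Type*} [Fintype V] (G : SimpleGraph V) (S U : Set (Sym2 V))
    (hSU : S ∪ U = G.edgeSet) (hdisj : Disjoint S U)
    (h2ec : TwoEdgeConnected G) (hn : 4 ≤ Fintype.card V) :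
    ∃ T : Set (Sym2 V), IsUSCS G U T ∧ T.ncard ≤ 2 * Fintype.card V - 4 :=
  stmt_10_general G U h2ec hn
end

section
/- Let G be a graph with a cut vertex v and let X₁, …, X_t be the connected components of G − v. If T is an unsafe spanning connected subgraph of G, then for each i ∈ [t], the restriction of T to edges within X_i ∪ {v} is an unsafe spanning connected subgraph of G[X_i ∪ {v}]. -/
open SimpleGraph

/-- `T` is an unsafe spanning connected subgraph of the subgraph of `G` induced by the
vertex set `s`: all edges of `T` are edges of `G` lying within `s`, the graph `(s, T)`
is spanning and connected, and it remains connected after removal of any single unsafe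
edge of `T`. -/
def IsUSCSOn {V : Type*} (G : SimpleGraph V) (Unsafe : Set (Sym2 V)) (s : Set V)
    (T : Set (Sym2 V)) : Prop :=
  T ⊆ G.edgeSet ∧ (∀ e ∈ T, ∀ x ∈ e, x ∈ s) ∧
    ((SimpleGraph.fromEdgeSet T).induce s).Connected ∧
    ∀ e ∈ T, e ∈ Unsafe → ((SimpleGraph.fromEdgeSet (T \ {e})).induce s).Connected

/-- `v` is a cut vertex of `G`: some two vertices are connected in `G` but not in `G - v`. -/
def IsCutVertex {V : Type*} (G : SimpleGraph V) (v : V) : Prop :=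
  ∃ (a b : V) (ha : a ≠ v) (hb : b ≠ v), G.Reachable a b ∧
    ¬ (G.induce {u | u ≠ v}).Reachable ⟨a, ha⟩ ⟨b, hb⟩

lemma key_cross {V : Type*} (G : SimpleGraph V) (v : V)
    (C : (G.induce {u | u ≠ v}).ConnectedComponent) (X : Set V)
    (hX : X = Subtype.val '' C.supp)
    {x y : V} (hxy : G.Adj x y) (hx : x ∈ insert v X) (hy : y ∉ insert v X) :
    x = v := by
  by_contra hxv
  have hxX : x ∈ X := hx.resolve_left hxv
  rw [hX] at hxX
  obtain ⟨u, hu, rfl⟩ := hxX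
  have hyv : y ≠ v := fun h => hy (h ▸ Set.mem_insert v X)
  have hadj : (G.induce {u | u ≠ v}).Adj u ⟨y, hyv⟩ := by
    simpa using hxy
  have hmem : (⟨y, hyv⟩ : {u | u ≠ v}) ∈ C.supp := by
    rw [SimpleGraph.ConnectedComponent.mem_supp_iff] at hu ⊢
    rw [← hu]
    exact SimpleGraph.ConnectedComponent.sound hadj.symm.reachable
  exact hy (Or.inr (hX ▸ ⟨_, hmem, rfl⟩))

lemma walk_restrict {V : Type*} (G : SimpleGraph V) (v : V)
    (C : (G.induce {u | u ≠ v}).ConnectedComponent) (X : Set V)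
    (hX : X = Subtype.val '' C.supp)
    (T : Set (Sym2 V)) (hTG : T ⊆ G.edgeSet)
    {a b : V} (w : (SimpleGraph.fromEdgeSet T).Walk a b) :
    (∀ (hb : b ∈ insert v X) (ha : a ∈ insert v X),
      ((SimpleGraph.fromEdgeSet {e | e ∈ T ∧ ∀ x ∈ e, x ∈ insert v X}).induce
        (insert v X)).Reachable ⟨a, ha⟩ ⟨b, hb⟩) ∧
    (∀ (hb : b ∈ insert v X), a ∉ insert v X →
      ((SimpleGraph.fromEdgeSet {e | e ∈ T ∧ ∀ x ∈ e, x ∈ insert v X}).induce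
        (insert v X)).Reachable ⟨v, Set.mem_insert v X⟩ ⟨b, hb⟩) := by
  induction w with
  | nil => exact ⟨fun hb ha => Reachable.refl _, fun hb hna => absurd hb hna⟩
  | @cons a c b h p ih =>
    rw [SimpleGraph.fromEdgeSet_adj] at h
    obtain ⟨hmem, hne⟩ := h
    have hG : G.Adj a c := (SimpleGraph.mem_edgeSet G).mp (hTG hmem)
    constructor
    · intro hb ha
      by_cases hc : c ∈ insert v X
      · have hadj : ((SimpleGraph.fromEdgeSet {e | e ∈ T ∧ ∀ x ∈ e, x ∈ insert v X}).induce
            (insert v X)).Adj ⟨a, ha⟩ ⟨c, hc⟩ := by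
          simp only [SimpleGraph.comap_adj, Function.Embedding.coe_subtype,
            SimpleGraph.fromEdgeSet_adj]
          refine ⟨⟨hmem, ?_⟩, hne⟩
          intro x hx
          rcases Sym2.mem_iff.mp hx with rfl | rfl
          · exact ha
          · exact hc
        exact hadj.reachable.trans (ih.1 hb hc)
      · have hav : a = v := key_cross G v C X hX hG ha hc
        subst hav
        exact ih.2 hb hc
    · intro hb hna
      by_cases hc : c ∈ insert v X
      · have hcv : c = v := key_cross G v C X hX hG.symm hc hna
        subst hcv
        exact ih.1 hb hc
      · exact ih.2 hb hc

theorem stmt_11 {V : Type*} (G : SimpleGraph V) (Unsafe : Set (Sym2 V)) (v : V)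
    (hv : IsCutVertex G v)
    (C : (G.induce {u | u ≠ v}).ConnectedComponent) (X : Set V)
    (hX : X = Subtype.val '' C.supp)
    (T : Set (Sym2 V)) (hT : IsUSCS G Unsafe T) :
    IsUSCSOn G Unsafe (insert v X) {e | e ∈ T ∧ ∀ x ∈ e, x ∈ insert v X} := by
  obtain ⟨hTG, hconn, hunsafe⟩ := hT
  refine ⟨fun e he => hTG he.1, fun e he => he.2, ?_, ?_⟩
  · rw [SimpleGraph.connected_iff]
    refine ⟨fun x y => ?_, ⟨⟨v, Set.mem_insert v X⟩⟩⟩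
    obtain ⟨x, hx⟩ := x
    obtain ⟨y, hy⟩ := y
    obtain ⟨w⟩ := hconn.preconnected x y
    exact (walk_restrict G v C X hX T hTG w).1 hy hx
  · intro e he heU
    have hconn' := hunsafe e he.1 heU
    have hset : {e' | e' ∈ T ∧ ∀ x ∈ e', x ∈ insert v X} \ {e} =
        {e' | e' ∈ T \ {e} ∧ ∀ x ∈ e', x ∈ insert v X} := by
      ext e'
      simp only [Set.mem_diff, Set.mem_setOf_eq, Set.mem_singleton_iff]
      tauto
    rw [hset, SimpleGraph.connected_iff]
    refine ⟨fun x y => ?_, ⟨⟨v, Set.mem_insert v X⟩⟩⟩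
    obtain ⟨x, hx⟩ := x
    obtain ⟨y, hy⟩ := y
    obtain ⟨w⟩ := hconn'.preconnected x y
    exact (walk_restrict G v C X hX (T \ {e}) (fun e' he' => hTG he'.1) w).1 hy hx
end

section
/- Let G be a 2-vertex-connected graph, and let X ⊆ V(G) be the vertex set of a cycle P₀ together with a maximal sequence of ears each of size at least 3 attached to it. Then Y = V(G) \ X is an independent set in G. -/
/-!
If two adjacent vertices `a`, `b` lie outside `X`, a path from `a` cut at its first vertex in `X`,
together with the edge `ab`, gives `x ∈ X` and `c₁, c₂ ∉ X` with `x c₁ c₂` a path. As `c₁` is not a cut vertex, `c₂`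
reaches `X` in `G - c₁`; stopping at the first vertex `z ∈ X` yields an ear `x c₁ c₂ ⋯ z` of size
at least 3 (a cycle ear if `z = x`, a path ear otherwise), against the maximality of `X`.
-/

open SimpleGraph

/-- A graph is 2-vertex-connected: it has at least 3 vertices, is connected, and removing
any single vertex leaves it connected (no cut vertex). -/
def TwoVertexConnected {V : Type*} (G : SimpleGraph V) : Prop :=
  3 ≤ Nat.card V ∧ G.Connected ∧ ∀ v : V, (G.induce {u | u ≠ v}).Connected

namespace SimpleGraph

variable {V : Type*} {G : SimpleGraph V}

lemma Walk.exists_isPath_to_first_mem {X : Set V} {u v : V} (w : G.Walk u v) (hu : u ∉ X)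
    (hv : v ∈ X) : ∃ x ∈ X, ∃ p : G.Walk u x, p.IsPath ∧ (∀ y ∈ p.support, y ∈ X → y = x) ∧
      p.support ⊆ w.support := by
  classical
  induction w with
  | nil => exact absurd hv hu
  | @cons u u' v h w' ih =>
    by_cases hu' : u' ∈ X
    · refine ⟨u', hu', .cons h .nil, by simp [h.ne], ?_, by simp⟩
      simp only [support_cons, support_nil, List.mem_cons, List.not_mem_nil, or_false]
      rintro y (rfl | rfl) hy
      exacts [absurd hy hu, rfl]
    · obtain ⟨x, hx, p, -, hpX, hpw⟩ := ih hu' hv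
      have hsupp : (cons h p).support ⊆ (cons h w').support := by
        simpa using List.cons_subset_cons u hpw
      refine ⟨x, hx, (cons h p).bypass, bypass_isPath _, fun y hy hyX => ?_,
        fun y hy => hsupp (support_bypass_subset_support _ hy)⟩
      have hy' := support_bypass_subset_support _ hy
      rw [support_cons, List.mem_cons] at hy'
      rcases hy' with rfl | hy'
      exacts [absurd hyX hu, hpX y hy' hyX]

lemma exists_walk_support_subset_of_induce_preconnected {s : Set V}
    (hs : (G.induce s).Preconnected) {u v : V} (hu : u ∈ s) (hv : v ∈ s) :
    ∃ p : G.Walk u v, ∀ y ∈ p.support, y ∈ s := by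
  obtain ⟨w⟩ := hs ⟨u, hu⟩ ⟨v, hv⟩
  refine ⟨w.map (Embedding.induce s).toHom, fun y hy => ?_⟩
  obtain ⟨y', -, rfl⟩ := List.mem_map.mp (Walk.support_map _ _ ▸ hy)
  exact y'.2

lemma Connected.exists_adj_adj_of_adj_compl {X : Set V} (hG : G.Connected) (hX : X.Nonempty)
    {a b : V} (ha : a ∉ X) (hb : b ∉ X) (hab : G.Adj a b) :
    ∃ x ∈ X, ∃ c₁ c₂, c₁ ∉ X ∧ c₂ ∉ X ∧ G.Adj x c₁ ∧ G.Adj c₁ c₂ := by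
  obtain ⟨x₀, hx₀⟩ := hX
  obtain ⟨x, hx, p, hp, hpX, -⟩ := (hG.preconnected a x₀).some.exists_isPath_to_first_mem ha hx₀
  have hrX : ∀ y ∈ p.reverse.support, y ∈ X → y = x := by simpa using hpX
  have hr := hp.reverse
  generalize p.reverse = r at hr hrX
  refine ⟨x, hx, ?_⟩
  cases r with
  | nil => exact absurd hx ha
  | @cons _ c₁ _ h₁ r =>
    cases r with
    | nil => exact ⟨a, b, ha, hb, h₁, hab⟩
    | @cons _ c₂ _ h₂ r =>
      simp only [Walk.cons_isPath_iff, Walk.support_cons, List.mem_cons, not_or] at hr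
      refine ⟨c₁, c₂, fun hc₁ => h₁.ne (hrX c₁ (by simp) hc₁).symm,
        fun hc₂ => hr.2.2 (hrX c₂ (by simp) hc₂ ▸ r.start_mem_support), h₁, h₂⟩

end SimpleGraph

section EarConstruction

variable {V : Type*} {G : SimpleGraph V} {X : Set V} {x c₁ c₂ z : V}

lemma earVerts_cons_cons_inter (hxc₁ : G.Adj x c₁) (hc₁c₂ : G.Adj c₁ c₂) (q : G.Walk c₂ z)
    (hx : x ∈ X) (hc₁ : c₁ ∉ X) (hz : z ∈ X) (hqX : ∀ y ∈ q.support, y ∈ X → y = z) :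
    earVerts (⟨x, z, .cons hxc₁ (.cons hc₁c₂ q)⟩ : Ear G) ∩ X = {x, z} := by
  ext y
  simp only [earVerts, Set.mem_inter_iff, Set.mem_ofPred_eq, Walk.support_cons, List.mem_cons,
    Set.mem_insert_iff, Set.mem_singleton_iff]
  constructor
  · rintro ⟨rfl | rfl | hy, hyX⟩
    exacts [Or.inl rfl, absurd hyX hc₁, Or.inr (hqX y hy hyX)]
  · rintro (rfl | rfl)
    exacts [⟨Or.inl rfl, hx⟩, ⟨Or.inr (Or.inr q.end_mem_support), hz⟩]

lemma isEarOver_cons_cons (hxc₁ : G.Adj x c₁) (hc₁c₂ : G.Adj c₁ c₂) (q : G.Walk c₂ z)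
    (hx : x ∈ X) (hc₁ : c₁ ∉ X) (hz : z ∈ X) (hc₂z : c₂ ≠ z) (hq : q.IsPath)
    (hc₁q : c₁ ∉ q.support) (hqX : ∀ y ∈ q.support, y ∈ X → y = z) :
    IsEarOver X (⟨x, z, .cons hxc₁ (.cons hc₁c₂ q)⟩ : Ear G) := by
  have hverts := earVerts_cons_cons_inter hxc₁ hc₁c₂ q hx hc₁ hz hqX
  rcases eq_or_ne x z with rfl | hxz
  · refine Or.inl ⟨⟨rfl, ?_⟩, by rwa [Set.pair_eq_singleton] at hverts⟩
    rw [Walk.copy_rfl_rfl, Walk.cons_isCycle_iff, Walk.cons_isPath_iff, Walk.edges_cons,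
      List.mem_cons, Sym2.eq_iff]
    refine ⟨⟨hq, hc₁q⟩, ?_⟩
    rintro ((⟨hxc₁', -⟩ | ⟨hxc₂, -⟩) | hmem)
    exacts [hxc₁.ne hxc₁', hc₂z hxc₂.symm, hc₁q (q.snd_mem_support_of_mem_edges hmem)]
  · refine Or.inr ⟨hxz, ?_, hverts⟩
    simp only [Walk.cons_isPath_iff, Walk.support_cons, List.mem_cons, not_or]
    exact ⟨⟨hq, hc₁q⟩, hxc₁.ne, fun hxq => hxz (hqX x hxq hx)⟩

lemma three_le_earSize_cons_cons (hxc₁ : G.Adj x c₁) (hc₁c₂ : G.Adj c₁ c₂) (q : G.Walk c₂ z)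
    (hc₂z : c₂ ≠ z) : 3 ≤ earSize (⟨x, z, .cons hxc₁ (.cons hc₁c₂ q)⟩ : Ear G) := by
  have : q.length ≠ 0 := fun h => hc₂z (Walk.eq_of_length_eq_zero h)
  simp only [earSize, Walk.length_cons]
  omega

end EarConstruction

theorem stmt_13_general {V : Type*} (G : SimpleGraph V) (h2vc : TwoVertexConnected G)
    (L : List (Ear G))
    (hcyc : ∃ h0 : 0 < L.length, IsCycleEar (L.get ⟨0, h0⟩))
    (X : Set V) (hX : X = {x | ∃ i, ∃ hi : i < L.length, x ∈ earVerts (L.get ⟨i, hi⟩)})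
    (hmax : ¬ ∃ e : Ear G, IsEarOver X e ∧ 3 ≤ earSize e) :
    ∀ a ∈ Xᶜ, ∀ b ∈ Xᶜ, ¬ G.Adj a b := by
  intro a ha b hb hab
  obtain ⟨h0, -⟩ := hcyc
  have hX0 : X.Nonempty := ⟨_, by rw [hX]; exact ⟨0, h0, Walk.start_mem_support _⟩⟩
  obtain ⟨x, hx, c₁, c₂, hc₁, hc₂, hxc₁, hc₁c₂⟩ :=
    h2vc.2.1.exists_adj_adj_of_adj_compl hX0 ha hb hab
  obtain ⟨w, hw⟩ := exists_walk_support_subset_of_induce_preconnected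
    (h2vc.2.2 c₁).preconnected (s := {u | u ≠ c₁}) hc₁c₂.ne' (fun h => hc₁ (h ▸ hx))
  obtain ⟨z, hz, q, hq, hqX, hqw⟩ := w.exists_isPath_to_first_mem hc₂ hx
  have hc₂z : c₂ ≠ z := fun h => hc₂ (h ▸ hz)
  exact hmax ⟨_, isEarOver_cons_cons hxc₁ hc₁c₂ q hx hc₁ hz hc₂z hq
    (fun h => hw c₁ (hqw h) rfl) hqX, three_le_earSize_cons_cons hxc₁ hc₁c₂ q hc₂z⟩

theorem stmt_13 {V : Type*} (G : SimpleGraph V) (h2vc : TwoVertexConnected G)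
    (L : List (Ear G))
    (hcyc : ∃ h0 : 0 < L.length, IsCycleEar (L.get ⟨0, h0⟩))
    (hdisj : ∀ i j (hi : i < L.length) (hj : j < L.length), i ≠ j →
      Disjoint (earEdges (L.get ⟨i, hi⟩)) (earEdges (L.get ⟨j, hj⟩)))
    (hattach : ∀ i (hi : i < L.length), 0 < i → IsEarOver (prevVerts L i) (L.get ⟨i, hi⟩))
    (hsize : ∀ i (hi : i < L.length), 0 < i → 3 ≤ earSize (L.get ⟨i, hi⟩))
    (X : Set V) (hX : X = {x | ∃ i, ∃ hi : i < L.length, x ∈ earVerts (L.get ⟨i, hi⟩)})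
    (hmax : ¬ ∃ e : Ear G, IsEarOver X e ∧ 3 ≤ earSize e) :
    ∀ a ∈ Xᶜ, ∀ b ∈ Xᶜ, ¬ G.Adj a b :=
  stmt_13_general G h2vc L hcyc X hX hmax
end

section
/- Let T be a spanning connected subgraph of G = (V, S, U) that remains connected after removal of any single unsafe edge in T, and suppose T contains vertices x₁, x₂ and y₁, y₂, y₃ such that all six edges {x_i, y_j} (i ∈ {1,2}, j ∈ {1,2,3}) are in T, y₃ has degree exactly 2 in T, and y₃ is incident to some safe edge of G. Then G has an unsafe spanning connected subgraph with at most |T| − 1 edges, obtained by removing {x₁, y₃} and {x₂, y₃} from T and adding a safe edge incident to y₃. -/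
open SimpleGraph

lemma key_conn {V : Type*} (T E : Set (Sym2 V)) (x₁ x₂ y₃ y' z : V)
    (hx1y3 : x₁ ≠ y₃) (hx2y3 : x₂ ≠ y₃) (hy'y3 : y' ≠ y₃)
    (hx1y' : x₁ ≠ y') (hx2y' : x₂ ≠ y') (hzy3 : z ≠ y₃)
    (hT1 : s(x₁, y') ∈ T) (hT2 : s(x₂, y') ∈ T)
    (hE1 : s(x₁, y') ∉ E) (hE2 : s(x₂, y') ∉ E) (hEz : s(y₃, z) ∉ E)
    (hdeg : ∀ a, s(y₃, a) ∈ T → a = x₁ ∨ a = x₂)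
    (hconn : (SimpleGraph.fromEdgeSet (T \ E)).Connected) :
    (SimpleGraph.fromEdgeSet (insert s(y₃, z) ((T \ {s(x₁, y₃), s(x₂, y₃)}) \ E))).Connected := by
  classical
  set W : Set (Sym2 V) := insert s(y₃, z) ((T \ {s(x₁, y₃), s(x₂, y₃)}) \ E) with hW
  set H := SimpleGraph.fromEdgeSet (T \ E) with hH
  set H' := SimpleGraph.fromEdgeSet W with hH'
  have mem' : ∀ f : Sym2 V, f ∈ T → f ∉ E → f ≠ s(x₁, y₃) → f ≠ s(x₂, y₃) → f ∈ W := by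
    intro f hf hfE h1 h2
    exact Set.mem_insert_of_mem _ ⟨⟨hf, by simp [h1, h2]⟩, hfE⟩
  have hadj1 : H'.Adj x₁ y' := by
    rw [hH', fromEdgeSet_adj]
    refine ⟨mem' _ hT1 hE1 ?_ ?_, hx1y'⟩ <;> simp [Sym2.eq_iff, hy'y3, hx1y3, hx2y3]
  have hadj2 : H'.Adj x₂ y' := by
    rw [hH', fromEdgeSet_adj]
    refine ⟨mem' _ hT2 hE2 ?_ ?_, hx2y'⟩ <;> simp [Sym2.eq_iff, hy'y3, hx1y3, hx2y3]
  have hreachxx : ∀ a b : V, (a = x₁ ∨ a = x₂) → (b = x₁ ∨ b = x₂) → H'.Reachable a b := by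
    intro a b ha hb
    have h1 : H'.Adj a y' := by rcases ha with h | h <;> subst h <;> assumption
    have h2 : H'.Adj b y' := by rcases hb with h | h <;> subst h <;> assumption
    exact h1.reachable.trans h2.symm.reachable
  set f : V → V := fun v => if v = y₃ then x₁ else v with hf
  have step : ∀ a b : V, H.Adj a b → H'.Reachable (f a) (f b) := by
    intro a b hab
    rw [hH, fromEdgeSet_adj] at hab
    obtain ⟨⟨habT, habE⟩, hne⟩ := hab
    by_cases ha : a = y₃
    · have hb : b ≠ y₃ := fun h => hne (ha.trans h.symm)
      have hbx : b = x₁ ∨ b = x₂ := hdeg b (by rwa [ha] at habT)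
      simp only [hf, if_pos ha, if_neg hb]
      exact hreachxx x₁ b (Or.inl rfl) hbx
    · by_cases hb : b = y₃
      · have hax : a = x₁ ∨ a = x₂ := by
          apply hdeg a
          rw [Sym2.eq_swap]
          rwa [hb] at habT
        simp only [hf, if_pos hb, if_neg ha]
        exact hreachxx a x₁ hax (Or.inl rfl)
      · have hmem : s(a, b) ∈ W := by
          apply mem' _ habT habE <;>
            · intro hcon
              rw [Sym2.eq_iff] at hcon
              rcases hcon with ⟨_, h⟩ | ⟨h, _⟩ <;> [exact hb h; exact ha h]
        have : H'.Adj a b := by rw [hH', fromEdgeSet_adj]; exact ⟨hmem, hne⟩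
        simp only [hf, if_neg ha, if_neg hb]
        exact this.reachable
  have lift : ∀ a b : V, H.Reachable a b → H'.Reachable (f a) (f b) := by
    intro a b hr
    obtain ⟨w⟩ := hr
    induction w with
    | nil => exact Reachable.refl _
    | cons h p ih => exact (step _ _ h).trans ih
  have hadjz : H'.Adj y₃ z := by
    rw [hH', fromEdgeSet_adj]
    exact ⟨Set.mem_insert _ _, fun h => hzy3 h.symm⟩
  have base : ∀ u : V, H'.Reachable u (f u) := by
    intro u
    by_cases hu : u = y₃
    · subst hu
      simp only [hf, if_pos rfl]
      have h1 : H'.Reachable z x₁ := by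
        have := lift z x₁ (hconn.preconnected z x₁)
        simpa only [hf, if_neg hzy3, if_neg hx1y3] using this
      exact hadjz.reachable.trans h1
    · simp only [hf, if_neg hu]
      exact Reachable.refl u
  rw [connected_iff]
  refine ⟨fun u v => ?_, hconn.nonempty⟩
  exact ((base u).trans (lift u v (hconn.preconnected u v))).trans (base v).symm

theorem stmt_14 {V : Type*} [Fintype V] (G : SimpleGraph V) (S U : Set (Sym2 V))
    (hSU : S ∪ U = G.edgeSet) (hdisj : Disjoint S U)
    (T : Set (Sym2 V)) (hT : IsUSCS G U T)
    (x₁ x₂ y₁ y₂ y₃ : V) (hnodup : ([x₁, x₂, y₁, y₂, y₃] : List V).Nodup)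
    (hedges : ∀ x ∈ ({x₁, x₂} : Set V), ∀ y ∈ ({y₁, y₂, y₃} : Set V), s(x, y) ∈ T)
    (hsafe : ∃ z : V, s(y₃, z) ∈ S)
    (hdeg : (SimpleGraph.fromEdgeSet T).neighborSet y₃ = {x₁, x₂}) :
    ∃ z : V, s(y₃, z) ∈ S ∧
      IsUSCS G U (insert s(y₃, z) (T \ {s(x₁, y₃), s(x₂, y₃)})) ∧
      (insert s(y₃, z) (T \ {s(x₁, y₃), s(x₂, y₃)})).ncard + 1 ≤ T.ncard := by
  obtain ⟨hTG, hTconn, hTdel⟩ := hT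
  obtain ⟨z, hz⟩ := hsafe
  -- distinctness
  simp only [List.nodup_cons, List.mem_cons, List.mem_singleton, List.not_mem_nil,
    or_false, not_or, List.nodup_nil, and_true] at hnodup
  obtain ⟨⟨h12, h1y1, h1y2, h1y3⟩, ⟨h2y1, h2y2, h2y3⟩, ⟨hy12, hy13⟩, hy23, -⟩ := hnodup
  have hzG : G.Adj y₃ z := by
    rw [← mem_edgeSet, ← hSU]; exact Or.inl hz
  have hzy3 : z ≠ y₃ := fun h => G.irrefl (h ▸ hzG)
  -- edges
  have hx1y1 : s(x₁, y₁) ∈ T := hedges x₁ (by simp) y₁ (by simp)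
  have hx1y2 : s(x₁, y₂) ∈ T := hedges x₁ (by simp) y₂ (by simp)
  have hx2y1 : s(x₂, y₁) ∈ T := hedges x₂ (by simp) y₁ (by simp)
  have hx2y2 : s(x₂, y₂) ∈ T := hedges x₂ (by simp) y₂ (by simp)
  have hx1y3 : s(x₁, y₃) ∈ T := hedges x₁ (by simp) y₃ (by simp)
  have hx2y3 : s(x₂, y₃) ∈ T := hedges x₂ (by simp) y₃ (by simp)
  -- degree condition
  have hdeg' : ∀ a, s(y₃, a) ∈ T → a = x₁ ∨ a = x₂ := by
    intro a haT
    have hane : y₃ ≠ a := by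
      intro h
      have := hTG haT
      rw [mem_edgeSet] at this
      exact G.irrefl (h ▸ this)
    have hadj : a ∈ (SimpleGraph.fromEdgeSet T).neighborSet y₃ := by
      rw [mem_neighborSet, fromEdgeSet_adj]
      exact ⟨haT, hane⟩
    rw [hdeg] at hadj
    simpa using hadj
  -- unsafe edge s(y₃,z) not in U
  have hzU : s(y₃, z) ∉ U := fun h => hdisj.ne_of_mem hz h rfl
  refine ⟨z, hz, ⟨?_, ?_, ?_⟩, ?_⟩
  · -- subset of edge set
    intro e he
    rcases he with he | he
    · rw [he, ← hSU]; exact Or.inl hz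
    · exact hTG he.1
  · -- connectivity
    have := key_conn T ∅ x₁ x₂ y₃ y₁ z h1y3 h2y3 hy13 h1y1 h2y1 hzy3
      hx1y1 hx2y1 (Set.notMem_empty _) (Set.notMem_empty _) (Set.notMem_empty _)
      hdeg' (by rwa [Set.diff_empty])
    rwa [Set.diff_empty] at this
  · -- fault tolerance
    intro e heT' heU
    have hez : e ≠ s(y₃, z) := fun h => hzU (h ▸ heU)
    have heT : e ∈ T := by
      rcases heT' with h | h
      · exact absurd h hez
      · exact h.1
    have hconn' := hTdel e heT heU
    -- choose y'
    have hkey : ∀ y' : V, y' ≠ y₃ → x₁ ≠ y' → x₂ ≠ y' → s(x₁, y') ∈ T → s(x₂, y') ∈ T →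
        s(x₁, y') ≠ e → s(x₂, y') ≠ e →
        (SimpleGraph.fromEdgeSet ((insert s(y₃, z) (T \ {s(x₁, y₃), s(x₂, y₃)})) \ {e})).Connected := by
      intro y' h1 h2 h3 h4 h5 h6 h7
      have := key_conn T {e} x₁ x₂ y₃ y' z h1y3 h2y3 h1 h2 h3 hzy3 h4 h5
        (by simpa using h6) (by simpa using h7) (by simpa using (Ne.symm hez))
        hdeg' hconn'
      rwa [Set.insert_diff_of_notMem _ (by simpa using Ne.symm hez)]
    by_cases hcase : e = s(x₁, y₁) ∨ e = s(x₂, y₁)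
    · -- use y₂
      apply hkey y₂ hy23 h1y2 h2y2 hx1y2 hx2y2
      · intro h
        rcases hcase with hc | hc <;> rw [hc, Sym2.eq_iff] at h <;>
          rcases h with ⟨h', h''⟩ | ⟨h', h''⟩ <;> simp_all
      · intro h
        rcases hcase with hc | hc <;> rw [hc, Sym2.eq_iff] at h <;>
          rcases h with ⟨h', h''⟩ | ⟨h', h''⟩ <;> simp_all
    · push_neg at hcase
      exact hkey y₁ hy13 h1y1 h2y1 hx1y1 hx2y1 (Ne.symm hcase.1) (Ne.symm hcase.2)
  · -- cardinality
    have hfin : T.Finite := Set.toFinite T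
    have he12 : s(x₁, y₃) ≠ s(x₂, y₃) := by
      intro h
      rcases Sym2.eq_iff.mp h with ⟨h', _⟩ | ⟨h', _⟩
      exacts [h12 h', h1y3 h']
    have hsub : ({s(x₁, y₃), s(x₂, y₃)} : Set (Sym2 V)) ⊆ T := by
      intro f hf; rcases hf with h | h <;> rw [h] <;> assumption
    have hd : (T \ {s(x₁, y₃), s(x₂, y₃)}).ncard = T.ncard - 2 := by
      rw [Set.ncard_diff hsub, Set.ncard_pair he12]
    have hle : 2 ≤ T.ncard := by
      have := Set.ncard_le_ncard hsub hfin
      rwa [Set.ncard_pair he12] at this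
    have hins := Set.ncard_insert_le s(y₃, z) (T \ {s(x₁, y₃), s(x₂, y₃)})
    omega
end

section
/- Let G be a connected graph whose every bridge is a safe edge, and suppose every unsafe edge of G lies on a cycle of G. If T_j is an unsafe spanning connected subgraph for each 2-edge-connected component C_j of G, then the union of all T_j together with all bridges of G is an unsafe spanning connected subgraph of G. -/
open SimpleGraph

/-! A path of `G` between two vertices crosses each 2-edge-connected component
`C_j` along a segment between two vertices of `C_j`, which `T_j` reconnects, and
otherwise uses only bridges, which are all kept. Removing an unsafe edge `e` cannot
hurt this argument: `e` is not a bridge, because bridges are safe, and each `T_j`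
stays connected without `e`. -/

namespace SimpleGraph

variable {V : Type*}

theorem Reachable.of_forall_adj_reachable {G H : SimpleGraph V}
    (hGH : ∀ ⦃u v⦄, G.Adj u v → H.Reachable u v) {u v : V} (h : G.Reachable u v) :
    H.Reachable u v := by
  rw [reachable_iff_reflTransGen] at h ⊢
  exact h.lift' id fun a b hab => (reachable_iff_reflTransGen a b).mp (hGH hab)

theorem Connected.of_forall_adj_reachable {G H : SimpleGraph V} (hG : G.Connected)
    (hGH : ∀ ⦃u v⦄, G.Adj u v → H.Reachable u v) : H.Connected :=
  (connected_iff H).mpr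
    ⟨fun u v => (hG.preconnected u v).of_forall_adj_reachable hGH, hG.nonempty⟩

theorem Connected.mem_edgeSet_of_isBridge {G : SimpleGraph V} (hG : G.Connected)
    {e : Sym2 V} (he : G.IsBridge e) : e ∈ G.edgeSet := by
  induction e using Sym2.ind with
  | h a b => exact (he.reachable_iff_adj).mp (hG.preconnected a b)

theorem reachable_fromEdgeSet_of_induce_connected {A W : Set (Sym2 V)} {s : Set V}
    (hAW : A ⊆ W) (h : ((fromEdgeSet A).induce s).Connected) {a b : V} (ha : a ∈ s)
    (hb : b ∈ s) : (fromEdgeSet W).Reachable a b :=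
  ((h.preconnected ⟨a, ha⟩ ⟨b, hb⟩).map (Embedding.induce s).toHom).mono
    (fromEdgeSet_mono hAW)

theorem connected_fromEdgeSet_of_bridges_subset {G : SimpleGraph V} (hG : G.Connected)
    {W : Set (Sym2 V)} (hbridges : {e | G.IsBridge e} ⊆ W)
    (hcomp : ∀ C : (G.deleteEdges {e | G.IsBridge e}).ConnectedComponent, ∀ a ∈ C.supp,
      ∀ b ∈ C.supp, (fromEdgeSet W).Reachable a b) :
    (fromEdgeSet W).Connected := by
  refine hG.of_forall_adj_reachable fun u v huv => ?_
  by_cases hbridge : G.IsBridge s(u, v)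
  · exact Adj.reachable ((fromEdgeSet_adj _).mpr ⟨hbridges hbridge, huv.ne⟩)
  · have hadj : (G.deleteEdges {e | G.IsBridge e}).Adj u v :=
      deleteEdges_adj.mpr ⟨huv, hbridge⟩
    exact hcomp _ u rfl v (ConnectedComponent.connectedComponentMk_eq_of_adj hadj.symm)

end SimpleGraph

theorem IsUSCSOn.reachable_fromEdgeSet_diff {V : Type*} {G : SimpleGraph V}
    {Unsafe : Set (Sym2 V)} {s : Set V} {T W : Set (Sym2 V)} (hT : IsUSCSOn G Unsafe s T)
    (hTW : T ⊆ W) {e : Sym2 V} (he : e ∈ Unsafe) {a b : V} (ha : a ∈ s) (hb : b ∈ s) :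
    (fromEdgeSet (W \ {e})).Reachable a b := by
  by_cases heT : e ∈ T
  · exact reachable_fromEdgeSet_of_induce_connected (Set.sdiff_subset_sdiff_left hTW)
      (hT.2.2.2 e heT he) ha hb
  · have hsub : T ⊆ W \ {e} := fun f hf =>
      ⟨hTW hf, fun hfe => heT (Set.mem_singleton_iff.mp hfe ▸ hf)⟩
    exact reachable_fromEdgeSet_of_induce_connected hsub hT.2.2.1 ha hb

theorem stmt_15_general {V : Type*} (G : SimpleGraph V) (S U : Set (Sym2 V))
    (hdisj : Disjoint S U)
    (hconn : G.Connected)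
    (hbridgeSafe : ∀ e : Sym2 V, G.IsBridge e → e ∈ S)
    (T : (G.deleteEdges {e | G.IsBridge e}).ConnectedComponent → Set (Sym2 V))
    (hT : ∀ C, IsUSCSOn G U C.supp (T C)) :
    IsUSCS G U ((⋃ C, T C) ∪ {e | G.IsBridge e}) := by
  have hTsub : ∀ C, T C ⊆ (⋃ C, T C) ∪ {e | G.IsBridge e} :=
    fun C => (Set.subset_iUnion T C).trans Set.subset_union_left
  refine ⟨Set.union_subset (Set.iUnion_subset fun C => (hT C).1)
      fun e => hconn.mem_edgeSet_of_isBridge, ?_, ?_⟩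
  · exact connected_fromEdgeSet_of_bridges_subset hconn Set.subset_union_right
      fun C a ha b hb =>
        reachable_fromEdgeSet_of_induce_connected (hTsub C) (hT C).2.2.1 ha hb
  · intro e _ heU
    have hbridges : {f | G.IsBridge f} ⊆ ((⋃ C, T C) ∪ {e | G.IsBridge e}) \ {e} :=
      fun f hf => ⟨Or.inr hf, fun hfe =>
        hdisj.ne_of_mem (hbridgeSafe f hf) heU (Set.mem_singleton_iff.mp hfe)⟩
    exact connected_fromEdgeSet_of_bridges_subset hconn hbridges
      fun C a ha b hb => (hT C).reachable_fromEdgeSet_diff (hTsub C) heU ha hb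

theorem stmt_15 {V : Type*} (G : SimpleGraph V) (S U : Set (Sym2 V))
    (hSU : S ∪ U = G.edgeSet) (hdisj : Disjoint S U)
    (hconn : G.Connected)
    (hbridgeSafe : ∀ e : Sym2 V, G.IsBridge e → e ∈ S)
    (hcycle : ∀ e ∈ U, ∃ (v : V) (p : G.Walk v v), p.IsCycle ∧ e ∈ p.edges)
    (T : (G.deleteEdges {e | G.IsBridge e}).ConnectedComponent → Set (Sym2 V))
    (hT : ∀ C, IsUSCSOn G U C.supp (T C)) :
    IsUSCS G U ((⋃ C, T C) ∪ {e | G.IsBridge e}) :=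
  stmt_15_general G S U hdisj hconn hbridgeSafe T hT
end
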